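/- Let S be a finite set of vectors in ℝᵈ partitioned into nonempty sets G and Q, let V(S) be the sample covariance matrix of S, and let P be any orthogonal projection matrix on ℝᵈ. Then the largest eigenvalue of (I−P)V(S)(I−P) is at least (|G|/|S|)·‖(I−P)(μ(G)−μ(S))‖₂². -/

import Mathlib

/-!
Let `u = (I - P)(μ(G) - μ(S))`. Since `I - P` is a symmetric idempotent, `u` is fixed by it, so
testing `(I - P) V(S) (I - P)` against `u` gives `uᵀ V(S) u`, and `⟪μ(G) - μ(S), u⟫ = ‖u‖²`.
In the between-group decomposition of `|S| · uᵀ V(S) u`, the points of `G` alone contribute at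
least `|G| ⟪μ(G) - μ(S), u⟫² = |G| ‖u‖⁴`. Bounding the quadratic form by the largest eigenvalue
times `‖u‖²` and dividing by `‖u‖²` gives the claim.
-/

/-- Sample mean of the vectors `y i` for `i` in a finite set `T`. -/
noncomputable def sampleMean {ι : Type*} {d : ℕ} (y : ι → Fin d → ℝ) (T : Finset ι) :
    Fin d → ℝ :=
  (T.card : ℝ)⁻¹ • ∑ i ∈ T, y i

/-- Sample covariance matrix of the vectors `y i` for `i` in a finite set `T`. -/
noncomputable def sampleCov {ι : Type*} {d : ℕ} (y : ι → Fin d → ℝ) (T : Finset ι) :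
    Matrix (Fin d) (Fin d) ℝ :=
  (T.card : ℝ)⁻¹ • ∑ i ∈ T,
    Matrix.vecMulVec (y i - sampleMean y T) (y i - sampleMean y T)

open Matrix Finset
open scoped MatrixOrder

namespace Matrix.IsHermitian

variable {n : Type*} [Fintype n] [DecidableEq n] {A : Matrix n n ℝ}

theorem le_iSup_eigenvalues_smul_one (hA : A.IsHermitian) :
    A ≤ (⨆ i, hA.eigenvalues i) • (1 : Matrix n n ℝ) := by
  rw [← Algebra.algebraMap_eq_smul_one]
  refine le_algebraMap_of_spectrum_le (fun x hx => ?_) hA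
  rw [hA.spectrum_real_eq_range_eigenvalues] at hx
  obtain ⟨i, rfl⟩ := hx
  exact le_ciSup (Set.finite_range _).bddAbove i

theorem dotProduct_mulVec_le_iSup_eigenvalues_mul (hA : A.IsHermitian) (x : n → ℝ) :
    x ⬝ᵥ A *ᵥ x ≤ (⨆ i, hA.eigenvalues i) * (x ⬝ᵥ x) := by
  have h := (le_iff.mp hA.le_iSup_eigenvalues_smul_one).dotProduct_mulVec_nonneg x
  rw [star_trivial, sub_mulVec, smul_mulVec, one_mulVec, dotProduct_sub, dotProduct_smul,
    smul_eq_mul] at h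
  linarith

end Matrix.IsHermitian

namespace Matrix.IsSymm

variable {n : Type*} [Fintype n] {Q : Matrix n n ℝ}

theorem dotProduct_mulVec_eq (hQ : Q.IsSymm) (x z : n → ℝ) : x ⬝ᵥ Q *ᵥ z = Q *ᵥ x ⬝ᵥ z := by
  rw [dotProduct_mulVec, ← mulVec_transpose, hQ.eq]

theorem dotProduct_mul_mul_mulVec (hQ : Q.IsSymm) (A : Matrix n n ℝ) (x : n → ℝ) :
    x ⬝ᵥ (Q * A * Q) *ᵥ x = Q *ᵥ x ⬝ᵥ A *ᵥ Q *ᵥ x := by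
  rw [← mulVec_mulVec, ← mulVec_mulVec, hQ.dotProduct_mulVec_eq]

theorem dotProduct_mulVec_self_of_isIdempotentElem (hQ : Q.IsSymm) (hQQ : IsIdempotentElem Q)
    (x : n → ℝ) : x ⬝ᵥ Q *ᵥ x = Q *ᵥ x ⬝ᵥ Q *ᵥ x := by
  conv_lhs => rw [← hQQ.eq, ← mulVec_mulVec]
  exact hQ.dotProduct_mulVec_eq x _

end Matrix.IsSymm

section SampleStatistics

variable {ι : Type*} {d : ℕ} (y : ι → Fin d → ℝ)

theorem card_smul_sampleMean (T : Finset ι) : (#T : ℝ) • sampleMean y T = ∑ i ∈ T, y i := by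
  rcases T.eq_empty_or_nonempty with rfl | hT
  · simp
  · exact smul_inv_smul₀ (by positivity) _

theorem sum_sub_sampleMean_dotProduct (T : Finset ι) (x : Fin d → ℝ) :
    ∑ i ∈ T, (y i - sampleMean y T) ⬝ᵥ x = 0 := by
  simp only [sub_dotProduct, sum_sub_distrib, sum_const, nsmul_eq_mul, ← sum_dotProduct,
    ← card_smul_sampleMean y T, smul_dotProduct, smul_eq_mul, sub_self]

/-- Between-group decomposition of the second moment about `c`, in the direction `x`. -/
theorem sum_sq_sub_dotProduct_eq (T : Finset ι) (c x : Fin d → ℝ) :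
    ∑ i ∈ T, ((y i - c) ⬝ᵥ x) ^ 2 =
      ∑ i ∈ T, ((y i - sampleMean y T) ⬝ᵥ x) ^ 2 + #T * ((sampleMean y T - c) ⬝ᵥ x) ^ 2 := by
  have hsplit : ∀ i, (y i - c) ⬝ᵥ x = (y i - sampleMean y T) ⬝ᵥ x + (sampleMean y T - c) ⬝ᵥ x :=
    fun i => by rw [← add_dotProduct, sub_add_sub_cancel]
  simp only [hsplit, add_sq, sum_add_distrib, ← sum_mul, ← mul_sum,
    sum_sub_sampleMean_dotProduct, sum_const, nsmul_eq_mul]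
  ring

theorem dotProduct_sampleCov_mulVec (T : Finset ι) (x : Fin d → ℝ) :
    x ⬝ᵥ sampleCov y T *ᵥ x = (#T : ℝ)⁻¹ * ∑ i ∈ T, ((y i - sampleMean y T) ⬝ᵥ x) ^ 2 := by
  rw [dotProduct_comm]
  simp only [sampleCov, smul_mulVec, sum_mulVec, vecMulVec_mulVec, op_smul_eq_smul,
    smul_dotProduct, sum_dotProduct, smul_eq_mul, sq]

theorem posSemidef_sampleCov (T : Finset ι) : (sampleCov y T).PosSemidef :=
  (posSemidef_sum T fun i _ => posSemidef_vecMulVec_self_star (y i - sampleMean y T)).smul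
    (by positivity)

theorem card_div_card_mul_sq_le_dotProduct_sampleCov_mulVec {G S : Finset ι} (hGS : G ⊆ S)
    (x : Fin d → ℝ) :
    (#G : ℝ) / #S * ((sampleMean y G - sampleMean y S) ⬝ᵥ x) ^ 2 ≤ x ⬝ᵥ sampleCov y S *ᵥ x := by
  have hwithin : 0 ≤ ∑ i ∈ G, ((y i - sampleMean y G) ⬝ᵥ x) ^ 2 :=
    sum_nonneg fun i _ => sq_nonneg _
  have hcontrib : (#G : ℝ) * ((sampleMean y G - sampleMean y S) ⬝ᵥ x) ^ 2 ≤
      ∑ i ∈ S, ((y i - sampleMean y S) ⬝ᵥ x) ^ 2 := by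
    calc _ ≤ ∑ i ∈ G, ((y i - sampleMean y S) ⬝ᵥ x) ^ 2 := by
          rw [sum_sq_sub_dotProduct_eq]; linarith
      _ ≤ _ := sum_le_sum_of_subset_of_nonneg hGS fun i _ _ => sq_nonneg _
  rw [dotProduct_sampleCov_mulVec, div_eq_inv_mul, mul_assoc]
  exact mul_le_mul_of_nonneg_left hcontrib (by positivity)

end SampleStatistics

theorem projected_cov_top_eigenvalue_lower_bound_general {ι : Type*} [DecidableEq ι] {d : ℕ}
    (y : ι → Fin d → ℝ) (S G Q : Finset ι) (hS : S = G ∪ Q)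
    (P : Matrix (Fin d) (Fin d) ℝ) (hPsym : P.IsHermitian) (hPproj : P * P = P)
    (hHerm : ((1 - P) * sampleCov y S * (1 - P)).IsHermitian) :
    ((G.card : ℝ) / (S.card : ℝ)) *
        (∑ j, ((1 - P).mulVec (sampleMean y G - sampleMean y S) j) ^ 2) ≤
      ⨆ i, hHerm.eigenvalues i := by
  have hherm : (1 - P).IsHermitian := isHermitian_one.sub hPsym
  have hsymm : (1 - P).IsSymm := isHermitian_iff_isSymm.mp hherm
  have hidem : IsIdempotentElem (1 - P) := IsIdempotentElem.one_sub hPproj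
  set u := (1 - P) *ᵥ (sampleMean y G - sampleMean y S) with hu
  have hPu : (1 - P) *ᵥ u = u := by rw [hu, mulVec_mulVec, hidem.eq]
  set L := ⨆ i, hHerm.eigenvalues i
  have hL : 0 ≤ L := Real.iSup_nonneg fun i => by
    have hM := (posSemidef_sampleCov y S).conjTranspose_mul_mul_same (1 - P)
    rw [hherm.eq] at hM
    exact hM.eigenvalues_nonneg i
  have hkey : (#G : ℝ) / #S * (u ⬝ᵥ u) ^ 2 ≤ L * (u ⬝ᵥ u) :=
    calc (#G : ℝ) / #S * (u ⬝ᵥ u) ^ 2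
        = #G / #S * ((sampleMean y G - sampleMean y S) ⬝ᵥ u) ^ 2 := by
          rw [hsymm.dotProduct_mulVec_self_of_isIdempotentElem hidem]
      _ ≤ u ⬝ᵥ sampleCov y S *ᵥ u :=
          card_div_card_mul_sq_le_dotProduct_sampleCov_mulVec y (hS ▸ subset_union_left) u
      _ = u ⬝ᵥ ((1 - P) * sampleCov y S * (1 - P)) *ᵥ u := by
          rw [hsymm.dotProduct_mul_mul_mulVec, hPu]
      _ ≤ L * (u ⬝ᵥ u) := hHerm.dotProduct_mulVec_le_iSup_eigenvalues_mul u
  have hnorm : ∑ j, u j ^ 2 = u ⬝ᵥ u := by simp only [dotProduct, sq]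
  rw [hnorm]
  rcases (show 0 ≤ u ⬝ᵥ u from sum_nonneg fun j _ => mul_self_nonneg (u j)).eq_or_lt
    with h0 | hpos
  · rwa [← h0, mul_zero]
  · rw [sq, ← mul_assoc] at hkey
    exact le_of_mul_le_mul_right hkey hpos

theorem projected_cov_top_eigenvalue_lower_bound {ι : Type*} [DecidableEq ι] {d : ℕ}
    (y : ι → Fin d → ℝ) (S G Q : Finset ι) (hdisj : Disjoint G Q) (hS : S = G ∪ Q)
    (hG : G.Nonempty) (hQ : Q.Nonempty)
    (P : Matrix (Fin d) (Fin d) ℝ) (hPsym : P.IsHermitian) (hPproj : P * P = P)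
    (hHerm : ((1 - P) * sampleCov y S * (1 - P)).IsHermitian) :
    ((G.card : ℝ) / (S.card : ℝ)) *
        (∑ j, ((1 - P).mulVec (sampleMean y G - sampleMean y S) j) ^ 2) ≤
      ⨆ i, hHerm.eigenvalues i :=
  projected_cov_top_eigenvalue_lower_bound_general y S G Q hS P hPsym hPproj hHerm
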